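/- For every integer n ≥ 1 there exist β > 0, a constant 0 < a < 0.1, a dimension d, a loss function f(w; z) on ℝ^d which as a function of w is β-smooth for every data point z but is not convex, twin datasets S, S' of size n, and a data point z, such that for every T > n, coupled uniform-sampling SGD with step sizes α_t = a/(0.99·β·t) initialized at w_0 = w_0' = 0 satisfies E_A[f(w_T; z) − f(w_T'; z)] ≥ T^a/(6·n^{1+a}); in particular the uniform stability satisfies ε_stab ≥ T^a/(6·n^{1+a}). -/

import Mathlib

open Finset
open scoped RealInnerProductSpace

noncomputable section

/-- SGD iterates: `sgd f α z w0 t` is the parameter after `t` steps, where `z s` is the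
data point used at step `s` and `α s` the step size of step `s` (steps are numbered from 1). -/
def sgd {d : ℕ} {Z : Type*} (f : EuclideanSpace ℝ (Fin d) → Z → ℝ) (α : ℕ → ℝ) (z : ℕ → Z)
    (w0 : EuclideanSpace ℝ (Fin d)) : ℕ → EuclideanSpace ℝ (Fin d)
  | 0 => w0
  | t + 1 => sgd f α z w0 t - α (t + 1) • gradient (fun w => f w (z (t + 1))) (sgd f α z w0 t)

/-- Divergence `Δ_t = w_t - w_t'` of coupled SGD on the datasets `S, S'` with the common
index sequence `idx` and common initialization `w0`. -/
def sgdDelta {d n : ℕ} {Z : Type*} (f : EuclideanSpace ℝ (Fin d) → Z → ℝ) (α : ℕ → ℝ)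
    (S S' : Fin n → Z) (idx : ℕ → Fin n) (w0 : EuclideanSpace ℝ (Fin d)) (t : ℕ) :
    EuclideanSpace ℝ (Fin d) :=
  sgd f α (fun s => S (idx s)) w0 t - sgd f α (fun s => S' (idx s)) w0 t

/-- Extend a finite index tuple (steps `1,…,T`) to an index sequence `ℕ → Fin n`. -/
def extSeq {n : ℕ} (hn : 0 < n) {T : ℕ} (ω : Fin T → Fin n) : ℕ → Fin n :=
  fun t => if h : 0 < t ∧ t ≤ T then ω ⟨t - 1, by omega⟩ else ⟨0, hn⟩

/-- Expectation over uniform-sampling SGD randomness: the indices `i_1,…,i_T` are i.i.d.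
uniform on `{1,…,n}` and `g` depends on the index sequence. -/
def expA {n : ℕ} (hn : 0 < n) (T : ℕ) (g : (ℕ → Fin n) → ℝ) : ℝ :=
  (∑ ω : Fin T → Fin n, g (extSeq hn ω)) / (n : ℝ) ^ T

open Classical in
/-- Conditional expectation over uniform-sampling SGD randomness given an event `E` of the
index sequence. -/
def expACond {n : ℕ} (hn : 0 < n) (T : ℕ) (g : (ℕ → Fin n) → ℝ)
    (E : (ℕ → Fin n) → Prop) : ℝ :=
  (∑ ω ∈ univ.filter (fun ω : Fin T → Fin n => E (extSeq hn ω)), g (extSeq hn ω)) /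
    ((univ.filter (fun ω : Fin T → Fin n => E (extSeq hn ω))).card : ℝ)

/-!
Take `d = 1` and the loss `f(w; (v, c)) = ⟪v, w⟫ - c/2 ‖w‖²` with `c` clamped to `[0, 1]`: it is
`1`-smooth, and concave for `c = 1`. On `S` every point is `(0, 1)`, so SGD started at `0` stays
at `0`. In `S'` the point `i` becomes `(M e, 1)`; each time `i` is drawn the iterate is pushed by
`-α_t M e`, and the concave term then multiplies it by `1 + α_t` at every later step. The iterate
is linear in the pushes, so its expected coordinate is `-(M/n)(∏_{t ≤ T} (1 + α_t) - 1)`, and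
Bernoulli's inequality gives `∏_{t ≤ T} (1 + κ/t) ≥ (T + 1)^κ`. Testing at the linear loss
`f(·; (e, 0))` yields a gap of at least `T^a` once `M = n / (1 - 2^{-a})`.
-/

section QuadLoss

variable {F : Type*} [NormedAddCommGroup F] [InnerProductSpace ℝ F]

lemma hasGradientAt_inner_sub_mul_norm_sq [CompleteSpace F] (v : F) (k : ℝ) (u : F) :
    HasGradientAt (fun w => ⟪v, w⟫ - k / 2 * ‖w‖ ^ 2) (v - k • u) u := by
  rw [hasGradientAt_iff_hasFDerivAt]
  refine ((innerSL ℝ v).hasFDerivAt.sub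
    ((hasStrictFDerivAt_norm_sq u).hasFDerivAt.const_mul (k / 2))).congr_fderiv ?_
  ext y
  simp only [sub_apply, coe_innerSL_apply, smul_apply, nsmul_eq_mul, Nat.cast_ofNat, smul_eq_mul,
    map_sub, map_smul, InnerProductSpace.toDual_apply_apply, sub_right_inj]
  ring

/-- The label `z.2`, clamped to `[0, 1]`, is the concavity of `quadLoss · z`; the clamp keeps
every `quadLoss · z` `1`-smooth. -/
def quadLoss (w : F) (z : F × ℝ) : ℝ :=
  ⟪z.1, w⟫ - (Set.projIcc 0 1 zero_le_one z.2 : ℝ) / 2 * ‖w‖ ^ 2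

lemma gradient_quadLoss [CompleteSpace F] (z : F × ℝ) (u : F) :
    gradient (fun w => quadLoss w z) u = z.1 - (Set.projIcc 0 1 zero_le_one z.2 : ℝ) • u :=
  (hasGradientAt_inner_sub_mul_norm_sq _ _ u).gradient

lemma norm_gradient_quadLoss_sub_le [CompleteSpace F] (z : F × ℝ) (u v : F) :
    ‖gradient (fun w => quadLoss w z) u - gradient (fun w => quadLoss w z) v‖ ≤ ‖u - v‖ := by
  obtain ⟨hk0, hk1⟩ := (Set.projIcc 0 1 zero_le_one z.2).2
  rw [gradient_quadLoss, gradient_quadLoss, sub_sub_sub_cancel_left, ← smul_sub, norm_smul,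
    Real.norm_of_nonneg hk0, norm_sub_rev]
  exact mul_le_of_le_one_left (norm_nonneg _) hk1

lemma not_convexOn_quadLoss {e : F} (he : e ≠ 0) (v : F) :
    ¬ ConvexOn ℝ Set.univ (fun w => quadLoss w (v, 1)) := by
  intro hconv
  have hmid := hconv.2 (Set.mem_univ e) (Set.mem_univ (-e)) (by norm_num : (0 : ℝ) ≤ 1 / 2)
    (by norm_num : (0 : ℝ) ≤ 1 / 2) (by norm_num)
  rw [show (1 / 2 : ℝ) • e + (1 / 2 : ℝ) • -e = 0 by module] at hmid
  have : 0 < ‖e‖ := norm_pos_iff.2 he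
  simp only [quadLoss, inner_zero_right, inner_neg_right, norm_zero, norm_neg, Set.projIcc_right,
    smul_eq_mul] at hmid
  nlinarith

lemma quadLoss_smul_self {e : F} (he : ‖e‖ = 1) (x : ℝ) : quadLoss (x • e) (e, 0) = x := by
  simp [quadLoss, real_inner_smul_right, he]

end QuadLoss

section LineData

variable {F : Type*} [AddCommGroup F] [Module ℝ F] {n : ℕ}

def lineData (e : F) (b : Fin n → ℝ) : Fin n → F × ℝ :=
  fun j => (b j • e, 1)

lemma lineData_eq_of_ne (e : F) {i j : Fin n} (M : ℝ) (h : j ≠ i) :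
    lineData e 0 j = lineData e (Pi.single i M) j := by
  simp [lineData, h]

lemma lineData_ne {e : F} (he : e ≠ 0) (i : Fin n) {M : ℝ} (hM : M ≠ 0) :
    lineData e 0 i ≠ lineData e (Pi.single i M) i := by
  simp [lineData, eq_comm (a := (0 : F)), hM, he]

end LineData

def lineIterate (α b : ℕ → ℝ) : ℕ → ℝ
  | 0 => 0
  | t + 1 => (1 + α (t + 1)) * lineIterate α b t - α (t + 1) * b (t + 1)

lemma sum_lineIterate {ι : Type*} (s : Finset ι) (α : ℕ → ℝ) (b : ι → ℕ → ℝ) (c : ℝ) {t : ℕ}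
    (hb : ∀ r ∈ Icc 1 t, ∑ ω ∈ s, b ω r = c) :
    ∑ ω ∈ s, lineIterate α (b ω) t = c * (1 - ∏ r ∈ Icc 1 t, (1 + α r)) := by
  induction t with
  | zero => simp [lineIterate]
  | succ t ih =>
    have hb' : ∀ r ∈ Icc 1 t, ∑ ω ∈ s, b ω r = c := fun r hr =>
      hb r (Icc_subset_Icc_right t.le_succ hr)
    simp only [lineIterate, sum_sub_distrib, ← mul_sum, ih hb',
      hb (t + 1) (mem_Icc.2 ⟨t.succ_pos, le_rfl⟩), prod_Icc_succ_top (Nat.le_add_left 1 t)]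
    ring

lemma sgd_quadLoss_lineData {d n : ℕ} (e : EuclideanSpace ℝ (Fin d)) (b : Fin n → ℝ)
    (α : ℕ → ℝ) (idx : ℕ → Fin n) (t : ℕ) :
    sgd quadLoss α (fun s => lineData e b (idx s)) 0 t =
      lineIterate α (fun s => b (idx s)) t • e := by
  induction t with
  | zero => simp [sgd, lineIterate]
  | succ t ih =>
    rw [sgd, ih, gradient_quadLoss]
    simp only [lineData, lineIterate, Set.projIcc_right]
    module

lemma extSeq_of_mem_Icc {n T : ℕ} (hn : 0 < n) (ω : Fin T → Fin n) {r : ℕ} (hr : r ∈ Icc 1 T) :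
    extSeq hn ω r = ω ⟨r - 1, by grind⟩ := by
  rw [extSeq, dif_pos (by grind)]

lemma sum_pi_single_extSeq {n T : ℕ} (hn : 0 < n) (i : Fin n) (M : ℝ) {r : ℕ}
    (hr : r ∈ Icc 1 T) :
    ∑ ω : Fin T → Fin n, (Pi.single i M : Fin n → ℝ) (extSeq hn ω r) = (n : ℝ) ^ (T - 1) * M := by
  simp only [extSeq_of_mem_Icc hn _ hr]
  rw [← Fintype.piFinset_univ, Fintype.sum_piFinset_apply]
  simp

lemma expA_mono {n : ℕ} (hn : 0 < n) (T : ℕ) {g h : (ℕ → Fin n) → ℝ}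
    (hgh : ∀ idx, g idx ≤ h idx) : expA hn T g ≤ expA hn T h :=
  div_le_div_of_nonneg_right (sum_le_sum fun ω _ => hgh _) (by positivity)

lemma expA_quadLoss_lineData {d n : ℕ} (hn : 0 < n) (T : ℕ) {e : EuclideanSpace ℝ (Fin d)}
    (he : ‖e‖ = 1) (i : Fin n) (M : ℝ) (α : ℕ → ℝ) :
    expA hn T (fun idx =>
        quadLoss (sgd quadLoss α (fun s => lineData e 0 (idx s)) 0 T) (e, 0) -
          quadLoss (sgd quadLoss α (fun s => lineData e (Pi.single i M) (idx s)) 0 T) (e, 0)) =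
      M / n * (∏ r ∈ Icc 1 T, (1 + α r) - 1) := by
  simp only [expA, sgd_quadLoss_lineData, quadLoss_smul_self he, sum_sub_distrib]
  rw [sum_lineIterate _ α _ 0 (by simp),
    sum_lineIterate _ α _ _ (fun r hr => sum_pi_single_extSeq hn i M hr)]
  rcases T with _ | T
  · simp
  · have : (n : ℝ) ≠ 0 := by positivity
    rw [add_tsub_cancel_right, pow_succ]
    field_simp
    ring

lemma add_one_rpow_le_prod_one_add_div {κ : ℝ} (hκ0 : 0 ≤ κ) (hκ1 : κ ≤ 1) (T : ℕ) :
    ((T : ℝ) + 1) ^ κ ≤ ∏ s ∈ Icc 1 T, (1 + κ / s) := by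
  induction T with
  | zero => simp
  | succ T ih =>
    have hT : (0 : ℝ) < T + 1 := by positivity
    rw [prod_Icc_succ_top (Nat.le_add_left 1 T), Nat.cast_succ,
      show (T : ℝ) + 1 + 1 = (T + 1) * (1 + 1 / (T + 1)) by field_simp,
      Real.mul_rpow hT.le (by positivity)]
    have hstep : (1 + 1 / ((T : ℝ) + 1)) ^ κ ≤ 1 + κ / (T + 1) :=
      (rpow_one_add_le_one_add_mul_self (by linarith [one_div_pos.2 hT]) hκ0 hκ1).trans_eq
        (by rw [mul_one_div])
    gcongr

lemma rpow_le_prod_one_add_div_sub_one_div {a κ : ℝ} (ha : 0 < a) (haκ : a ≤ κ) (hκ : κ ≤ 1)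
    {T : ℕ} (hT : 2 ≤ T) :
    (T : ℝ) ^ a ≤ (∏ s ∈ Icc 1 T, (1 + κ / s) - 1) / (1 - 2 ^ (-a)) := by
  have hT1 : (1 : ℝ) ≤ T := by exact_mod_cast (by omega : 1 ≤ T)
  have hprod : (T : ℝ) ^ a ≤ ∏ s ∈ Icc 1 T, (1 + κ / s) :=
    calc (T : ℝ) ^ a ≤ (T : ℝ) ^ κ := Real.rpow_le_rpow_of_exponent_le hT1 haκ
      _ ≤ ((T : ℝ) + 1) ^ κ := Real.rpow_le_rpow (by linarith) (by linarith) (by linarith)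
      _ ≤ _ := add_one_rpow_le_prod_one_add_div (ha.le.trans haκ) hκ T
  have htwo : 1 ≤ 2 ^ (-a) * (T : ℝ) ^ a := by
    rw [Real.rpow_neg zero_le_two, inv_mul_eq_div, one_le_div (by positivity)]
    exact Real.rpow_le_rpow zero_le_two (by exact_mod_cast hT) ha.le
  have hc : 0 < 1 - (2 : ℝ) ^ (-a) :=
    sub_pos.2 (Real.rpow_lt_one_of_one_lt_of_neg one_lt_two (by linarith))
  rw [le_div_iff₀ hc]
  nlinarith

/-- stability lower bound for non-convex smooth losses with step sizes
`α_t = a/(0.99βt)`. -/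
theorem statement9 (n : ℕ) (hn : 0 < n) :
    ∃ (β a : ℝ), 0 < β ∧ 0 < a ∧ a < 0.1 ∧
    ∃ (d : ℕ) (f : EuclideanSpace ℝ (Fin d) → EuclideanSpace ℝ (Fin d) × ℝ → ℝ)
      (S S' : Fin n → EuclideanSpace ℝ (Fin d) × ℝ) (i : Fin n)
      (z : EuclideanSpace ℝ (Fin d) × ℝ),
      -- f is β-smooth in w for every data point, but not convex
      (∀ z u v, ‖gradient (fun w => f w z) u - gradient (fun w => f w z) v‖ ≤ β * ‖u - v‖) ∧
      (∃ z, ¬ ConvexOn ℝ Set.univ (fun w => f w z)) ∧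
      -- S, S' are twin datasets differing exactly at index i
      (∀ j, j ≠ i → S j = S' j) ∧ S i ≠ S' i ∧
      -- SGD with step sizes α_t = a/(0.99βt) from w₀ = 0, for every horizon T > n
      (∀ T : ℕ, n < T →
        expA hn T (fun idx =>
            f (sgd f (fun t => a / (0.99 * β * t)) (fun s => S (idx s)) 0 T) z -
              f (sgd f (fun t => a / (0.99 * β * t)) (fun s => S' (idx s)) 0 T) z) ≥
          (T : ℝ) ^ a / (6 * (n : ℝ) ^ (1 + a)) ∧
        -- in particular, uniform stability is at least T^a/(6 n^{1+a})
        (∀ ε : ℝ,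
          (∀ (Sa Sb : Fin n → EuclideanSpace ℝ (Fin d) × ℝ) (ia : Fin n),
              (∀ j, j ≠ ia → Sa j = Sb j) →
              ∀ za, expA hn T (fun idx =>
                |f (sgd f (fun t => a / (0.99 * β * t)) (fun s => Sa (idx s)) 0 T) za -
                  f (sgd f (fun t => a / (0.99 * β * t)) (fun s => Sb (idx s)) 0 T) za|) ≤ ε) →
            (T : ℝ) ^ a / (6 * (n : ℝ) ^ (1 + a)) ≤ ε)) := by
  set a : ℝ := 0.05
  set e : EuclideanSpace ℝ (Fin 1) := EuclideanSpace.single 0 1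
  set i : Fin n := ⟨0, hn⟩
  set M : ℝ := n / (1 - 2 ^ (-a))
  have he : ‖e‖ = 1 := by simp [e]
  have he0 : e ≠ 0 := norm_ne_zero_iff.1 (he ▸ one_ne_zero)
  have hM : M ≠ 0 := by
    have : (2 : ℝ) ^ (-a) < 1 := Real.rpow_lt_one_of_one_lt_of_neg one_lt_two (by norm_num [a])
    exact div_ne_zero (by positivity) (by linarith)
  refine ⟨1, a, one_pos, by norm_num [a], by norm_num [a], 1, quadLoss, lineData e 0,
    lineData e (Pi.single i M), i, (e, 0),
    fun z u v => by simpa using norm_gradient_quadLoss_sub_le z u v,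
    ⟨(0, 1), not_convexOn_quadLoss he0 0⟩, fun j => lineData_eq_of_ne e M,
    lineData_ne he0 i hM, fun T hT => ?_⟩
  have hgap : (T : ℝ) ^ a ≤ expA hn T (fun idx =>
      quadLoss (sgd quadLoss (fun t => a / (0.99 * 1 * t))
          (fun s => lineData e 0 (idx s)) 0 T) (e, 0) -
        quadLoss (sgd quadLoss (fun t => a / (0.99 * 1 * t))
          (fun s => lineData e (Pi.single i M) (idx s)) 0 T) (e, 0)) := by
    rw [expA_quadLoss_lineData hn T he, div_div_cancel_left' (by positivity : (n : ℝ) ≠ 0)]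
    simp only [mul_one, ← div_div]
    simpa [div_eq_inv_mul] using rpow_le_prod_one_add_div_sub_one_div (κ := a / 0.99)
      (by norm_num [a]) (by norm_num [a]) (by norm_num [a]) (by omega : 2 ≤ T)
  have hsmall : (T : ℝ) ^ a / (6 * (n : ℝ) ^ (1 + a)) ≤ (T : ℝ) ^ a := by
    refine div_le_self (by positivity) ?_
    have : (1 : ℝ) ≤ (n : ℝ) ^ (1 + a) := Real.one_le_rpow (by exact_mod_cast hn) (by norm_num [a])
    linarith
  exact ⟨hsmall.trans hgap, fun ε hε => (hsmall.trans hgap).trans <|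
    (expA_mono hn T fun _ => le_abs_self _).trans (hε _ _ i (fun j => lineData_eq_of_ne e M) _)⟩
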